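/- For a one-dimensional simple random walk, the asymptotic constants in $\langle e^{-uh}\rangle_n^{+,\mathrm{simp}} \sim A_u n^{-1/6} \exp\{-\lambda_u n^{1/3}\}$ are given by applying the Laplace asymptotics to $4 e^{2u}(1-e^{-u}) \int_0^\infty x^{-1} \exp\{-(n\pi^2/(4x^2) + ux)\} dx$: explicitly, as $n \to \infty$, $\int_0^\infty x^{-1} \exp\left\{-\left(\frac{n\pi^2}{4x^2} + ux\right)\right\} dx \sim \frac{2^{2/3}\pi^{1/6} u^{-1/3}}{\sqrt{3}}\, n^{-1/6} \exp\left\{-2^{-4/3} \cdot 3 \cdot \pi^{2/3} u^{2/3} n^{1/3}\right\}$ for each fixed $u > 0$. -/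

import Mathlib

/-!
Put `n = s⁶` and `x = s² y`: the exponent becomes `s² φ(y)` with `φ(y) = a / y² + u y`
(`a = π² / 4`). The phase is minimal at `y₀` with `u y₀³ = 2 a`, where `φ(y₀) = 3/2 u y₀`, and
`φ(y) - φ(y₀) = u (y - y₀)² (y₀ + 2 y) / (2 y²)`. Zooming in with `y = y₀ + t / s`, the integrand
tends to the Gaussian `y₀⁻¹ exp (-(3 u / (2 y₀)) t²)` and, for `s ≥ 1`, is dominated by a Gaussian
on `t ≤ 0` and by `exp (-u t)` on `t > 0`; dominated convergence then gives Laplace's asymptotics.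
-/

open Real Filter Topology MeasureTheory Set Asymptotics

lemma div_sq_add_mul_eq_of_mul_cube {a u y₀ y : ℝ} (ha : u * y₀ ^ 3 = 2 * a) (hy : y ≠ 0) :
    a / y ^ 2 + u * y = 3 / 2 * u * y₀ + u * (y - y₀) ^ 2 * (y₀ + 2 * y) / (2 * y ^ 2) := by
  field_simp
  linear_combination (-1 : ℝ) * ha

/-- `y⁻¹ exp (-s² (φ y - φ y₀))` rewritten through `s (y - y₀) = t`. -/
noncomputable def laplaceKernel (u y₀ t y : ℝ) : ℝ :=
  y⁻¹ * exp (-(u * t ^ 2 * (y₀ + 2 * y) / (2 * y ^ 2)))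

noncomputable def rescaledIntegrand (u y₀ s t : ℝ) : ℝ :=
  (Ioi 0).indicator (laplaceKernel u y₀ t) (y₀ + t / s)

noncomputable def laplaceDominator (u y₀ t : ℝ) : ℝ :=
  (2 / y₀ + 8 / (u * y₀ ^ 2)) * exp (-(u / (4 * y₀)) * t ^ 2) +
    (Ioi 0).indicator (fun t => y₀⁻¹ * exp (u * y₀) * exp (-u * t)) t

section

variable {u y₀ t y : ℝ}

lemma laplaceKernel_le_of_ge (hu : 0 < u) (hy₀ : 0 < y₀) (hy : y₀ ≤ y) (ht : y - y₀ ≤ t) :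
    laplaceKernel u y₀ t y ≤ y₀⁻¹ * exp (u * y₀) * exp (-u * t) := by
  have hypos : 0 < y := hy₀.trans_le hy
  have hexp : u * t - u * y₀ ≤ u * t ^ 2 * (y₀ + 2 * y) / (2 * y ^ 2) := by
    rw [le_div_iff₀ (by positivity)]
    nlinarith [mul_nonneg (mul_nonneg hu.le (sq_nonneg t)) hy₀.le,
      mul_nonneg (mul_nonneg hu.le hypos.le) (sq_nonneg (t - y)),
      mul_nonneg (mul_nonneg hu.le (sq_nonneg y)) (by linarith : 0 ≤ t + y₀ - y)]
  calc laplaceKernel u y₀ t y ≤ y₀⁻¹ * exp (-(u * t - u * y₀)) :=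
        mul_le_mul (inv_anti₀ hy₀ hy) (exp_le_exp.2 (neg_le_neg hexp)) (exp_pos _).le
          (by positivity)
    _ = y₀⁻¹ * exp (u * y₀) * exp (-u * t) := by rw [mul_assoc, ← exp_add]; ring_nf

lemma laplaceKernel_le_of_le (hu : 0 < u) (hy₀ : 0 < y₀) (hy : 0 < y) (hyy₀ : y ≤ y₀)
    (ht : y₀ - y ≤ -t) :
    laplaceKernel u y₀ t y ≤ (2 / y₀ + 8 / (u * y₀ ^ 2)) * exp (-(u / (4 * y₀)) * t ^ 2) := by
  set b := u * t ^ 2 * y₀ / (4 * y ^ 2) with hb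
  have hsplit : u / (4 * y₀) * t ^ 2 + b ≤ u * t ^ 2 * (y₀ + 2 * y) / (2 * y ^ 2) := by
    have : u * t ^ 2 * (y₀ + 2 * y) / (2 * y ^ 2) - (u / (4 * y₀) * t ^ 2 + b)
        = u * t ^ 2 * (y₀ ^ 2 - y ^ 2 + 4 * y₀ * y) / (4 * y₀ * y ^ 2) := by
      rw [hb]; field_simp; ring
    have : 0 ≤ u * t ^ 2 * (y₀ ^ 2 - y ^ 2 + 4 * y₀ * y) / (4 * y₀ * y ^ 2) := by
      have : 0 ≤ y₀ ^ 2 - y ^ 2 + 4 * y₀ * y := by nlinarith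
      positivity
    linarith
  -- `y⁻¹ e^{-b}` stays bounded as `y → 0` because then `|t| ≥ y₀ - y` keeps `b` of order `y⁻²`.
  have hbounded : y⁻¹ * exp (-b) ≤ 2 / y₀ + 8 / (u * y₀ ^ 2) := by
    rcases le_or_gt (y₀ / 2) y with hy2 | hy2
    · calc y⁻¹ * exp (-b) ≤ y⁻¹ * 1 := by
            gcongr; exact exp_le_one_iff.2 (neg_nonpos.2 (by positivity))
        _ ≤ 2 / y₀ := by rw [mul_one, inv_eq_one_div, div_le_div_iff₀ hy hy₀]; linarith
        _ ≤ 2 / y₀ + 8 / (u * y₀ ^ 2) := le_add_of_nonneg_right (by positivity)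
    · have ht2 : y₀ ^ 2 / 4 ≤ t ^ 2 := by nlinarith
      have ht0 : 0 < t ^ 2 := lt_of_lt_of_le (by positivity) ht2
      have hb0 : 0 < b := by positivity
      calc y⁻¹ * exp (-b) ≤ y⁻¹ * b⁻¹ := by
            gcongr
            rw [exp_neg]
            exact inv_anti₀ hb0 ((le_add_of_nonneg_right zero_le_one).trans (add_one_le_exp b))
        _ = 4 * y / (u * t ^ 2 * y₀) := by rw [hb]; field_simp
        _ ≤ 8 / (u * y₀ ^ 2) := by
            rw [div_le_div_iff₀ (by positivity) (by positivity)]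
            have : y * y₀ ≤ 2 * t ^ 2 := by nlinarith
            nlinarith [mul_le_mul_of_nonneg_left this (mul_pos hu hy₀).le]
        _ ≤ 2 / y₀ + 8 / (u * y₀ ^ 2) := le_add_of_nonneg_left (by positivity)
  calc laplaceKernel u y₀ t y ≤ y⁻¹ * (exp (-b) * exp (-(u / (4 * y₀)) * t ^ 2)) := by
        rw [laplaceKernel, ← exp_add]
        gcongr
        linarith
    _ = y⁻¹ * exp (-b) * exp (-(u / (4 * y₀)) * t ^ 2) := by ring
    _ ≤ (2 / y₀ + 8 / (u * y₀ ^ 2)) * exp (-(u / (4 * y₀)) * t ^ 2) := by gcongr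

lemma rescaledIntegrand_nonneg (u y₀ s t : ℝ) : 0 ≤ rescaledIntegrand u y₀ s t :=
  indicator_nonneg (fun y (hy : 0 < y) => by unfold laplaceKernel; positivity) _

lemma rescaledIntegrand_le_laplaceDominator (hu : 0 < u) (hy₀ : 0 < y₀) {s : ℝ} (hs : 1 ≤ s) :
    rescaledIntegrand u y₀ s t ≤ laplaceDominator u y₀ t := by
  have hgauss : 0 ≤ (2 / y₀ + 8 / (u * y₀ ^ 2)) * exp (-(u / (4 * y₀)) * t ^ 2) := by positivity
  have hexp : 0 ≤ (Ioi 0).indicator (fun t => y₀⁻¹ * exp (u * y₀) * exp (-u * t)) t :=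
    indicator_nonneg (fun _ _ => by positivity) _
  have hs0 : 0 < s := by linarith
  by_cases hy : 0 < y₀ + t / s
  · rw [rescaledIntegrand, indicator_of_mem (mem_Ioi.2 hy), laplaceDominator]
    rcases le_or_gt t 0 with ht | ht
    · have hts : t ≤ t / s := by rw [le_div_iff₀ hs0]; nlinarith
      have hts' : t / s ≤ 0 := div_nonpos_of_nonpos_of_nonneg ht hs0.le
      exact (laplaceKernel_le_of_le hu hy₀ hy (by linarith) (by linarith)).trans
        (le_add_of_nonneg_right hexp)
    · rw [indicator_of_mem (mem_Ioi.2 ht)]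
      have hts : t / s ≤ t := div_le_self ht.le hs
      have hts' : 0 ≤ t / s := div_nonneg ht.le hs0.le
      exact (laplaceKernel_le_of_ge hu hy₀ (by linarith) (by linarith)).trans
        (le_add_of_nonneg_left hgauss)
  · rw [rescaledIntegrand, indicator_of_notMem (show y₀ + t / s ∉ Ioi 0 from hy)]
    exact add_nonneg hgauss hexp

lemma integrable_laplaceDominator (hu : 0 < u) (hy₀ : 0 < y₀) :
    Integrable (laplaceDominator u y₀) :=
  ((integrable_exp_neg_mul_sq (by positivity)).const_mul _).add
    (IntegrableOn.integrable_indicator ((exp_neg_integrableOn_Ioi 0 hu).const_mul _)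
      measurableSet_Ioi)

lemma measurable_rescaledIntegrand (u y₀ s : ℝ) : Measurable (rescaledIntegrand u y₀ s) := by
  unfold rescaledIntegrand laplaceKernel
  simp only [indicator_apply]
  have hy : Measurable fun t : ℝ => y₀ + t / s := by fun_prop
  exact Measurable.ite (measurableSet_Ioi.preimage hy) (by fun_prop) measurable_const

lemma tendsto_rescaledIntegrand (hy₀ : 0 < y₀) (t : ℝ) :
    Tendsto (fun s => rescaledIntegrand u y₀ s t) atTop
      (𝓝 (y₀⁻¹ * exp (-(3 * u / (2 * y₀)) * t ^ 2))) := by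
  have hy : Tendsto (fun s : ℝ => y₀ + t / s) atTop (𝓝 y₀) := by
    have h0 : Tendsto (fun s : ℝ => t / s) atTop (𝓝 0) := tendsto_const_nhds.div_atTop tendsto_id
    simpa using h0.const_add y₀
  have hK : ContinuousAt (laplaceKernel u y₀ t) y₀ := by
    unfold laplaceKernel
    fun_prop (disch := positivity)
  have hlim : laplaceKernel u y₀ t y₀ = y₀⁻¹ * exp (-(3 * u / (2 * y₀)) * t ^ 2) := by
    unfold laplaceKernel; congr 2; field_simp; ring
  rw [← hlim]
  refine (hK.tendsto.comp hy).congr' ?_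
  filter_upwards [hy.eventually_const_lt hy₀] with s hs
  exact (indicator_of_mem hs _).symm

lemma tendsto_integral_rescaledIntegrand (hu : 0 < u) (hy₀ : 0 < y₀) :
    Tendsto (fun s => ∫ t, rescaledIntegrand u y₀ s t) atTop
      (𝓝 (y₀⁻¹ * √(π / (3 * u / (2 * y₀))))) := by
  have h := tendsto_integral_filter_of_dominated_convergence (laplaceDominator u y₀)
    (Eventually.of_forall fun s => (measurable_rescaledIntegrand u y₀ s).aestronglyMeasurable)
    (by
      filter_upwards [eventually_ge_atTop 1] with s hs
      exact ae_of_all _ fun t => by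
        rw [norm_of_nonneg (rescaledIntegrand_nonneg u y₀ s t)]
        exact rescaledIntegrand_le_laplaceDominator hu hy₀ hs)
    (integrable_laplaceDominator hu hy₀) (ae_of_all _ (tendsto_rescaledIntegrand hy₀))
  rwa [integral_const_mul, integral_gaussian] at h

end

lemma indicator_integrand_eq {a u y₀ s : ℝ} (ha : u * y₀ ^ 3 = 2 * a) (hs : 0 < s) (t : ℝ) :
    (Ioi 0).indicator (fun x => x⁻¹ * exp (-(s ^ 6 * a / x ^ 2 + u * x))) (s * t + s ^ 2 * y₀) =
      (s ^ 2)⁻¹ * exp (-(3 / 2 * u * y₀ * s ^ 2)) * rescaledIntegrand u y₀ s t := by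
  have hx : s * t + s ^ 2 * y₀ = s ^ 2 * (y₀ + t / s) := by field_simp; ring
  rw [rescaledIntegrand, hx]
  by_cases hy : 0 < y₀ + t / s
  · rw [indicator_of_mem (mem_Ioi.2 (by positivity)), indicator_of_mem (mem_Ioi.2 hy),
      laplaceKernel]
    set y := y₀ + t / s with hydef
    have hphase : s ^ 6 * a / (s ^ 2 * y) ^ 2 + u * (s ^ 2 * y) =
        3 / 2 * u * y₀ * s ^ 2 + u * t ^ 2 * (y₀ + 2 * y) / (2 * y ^ 2) :=
      calc s ^ 6 * a / (s ^ 2 * y) ^ 2 + u * (s ^ 2 * y) = s ^ 2 * (a / y ^ 2 + u * y) := by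
            field_simp
        _ = s ^ 2 * (3 / 2 * u * y₀ + u * (y - y₀) ^ 2 * (y₀ + 2 * y) / (2 * y ^ 2)) := by
            rw [div_sq_add_mul_eq_of_mul_cube ha hy.ne']
        _ = 3 / 2 * u * y₀ * s ^ 2 + u * t ^ 2 * (y₀ + 2 * y) / (2 * y ^ 2) := by
            rw [show y - y₀ = t / s by rw [hydef]; ring]; field_simp
    rw [hphase, neg_add, exp_add, mul_inv]
    ring
  · have hx0 : s ^ 2 * (y₀ + t / s) ∉ Ioi 0 := fun h => hy (pos_of_mul_pos_right h (by positivity))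
    rw [indicator_of_notMem hx0, indicator_of_notMem (show y₀ + t / s ∉ Ioi 0 from hy), mul_zero]

lemma integral_eq_mul_integral_rescaledIntegrand {a u y₀ s : ℝ} (ha : u * y₀ ^ 3 = 2 * a)
    (hs : 0 < s) :
    ∫ x in Ioi 0, x⁻¹ * exp (-(s ^ 6 * a / x ^ 2 + u * x)) =
      s⁻¹ * exp (-(3 / 2 * u * y₀ * s ^ 2)) * ∫ t, rescaledIntegrand u y₀ s t := by
  set f := fun x => x⁻¹ * exp (-(s ^ 6 * a / x ^ 2 + u * x))
  calc ∫ x in Ioi 0, f x = ∫ x, (Ioi 0).indicator f (x + s ^ 2 * y₀) := by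
        rw [integral_add_right_eq_self (fun x => (Ioi 0).indicator f x),
          integral_indicator measurableSet_Ioi]
    _ = s * ∫ t, (Ioi 0).indicator f (s * t + s ^ 2 * y₀) := by
        rw [Measure.integral_comp_mul_left (fun x => (Ioi 0).indicator f (x + s ^ 2 * y₀)),
          abs_of_pos (inv_pos.2 hs), smul_eq_mul, mul_inv_cancel_left₀ hs.ne']
    _ = s * ∫ t, (s ^ 2)⁻¹ * exp (-(3 / 2 * u * y₀ * s ^ 2)) * rescaledIntegrand u y₀ s t := by
        congr 2 with t
        exact indicator_integrand_eq ha hs t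
    _ = s⁻¹ * exp (-(3 / 2 * u * y₀ * s ^ 2)) * ∫ t, rescaledIntegrand u y₀ s t := by
        rw [integral_const_mul]
        field_simp

theorem integral_inv_mul_exp_isEquivalent {a u y₀ : ℝ} (hu : 0 < u) (hy₀ : 0 < y₀)
    (ha : u * y₀ ^ 3 = 2 * a) :
    (fun s : ℝ => ∫ x in Ioi 0, x⁻¹ * exp (-(s ^ 6 * a / x ^ 2 + u * x))) ~[atTop]
      fun s => s⁻¹ * exp (-(3 / 2 * u * y₀ * s ^ 2)) * (y₀⁻¹ * √(π / (3 * u / (2 * y₀)))) := by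
  have hL : (fun s => ∫ t, rescaledIntegrand u y₀ s t) ~[atTop]
      fun _ => y₀⁻¹ * √(π / (3 * u / (2 * y₀))) :=
    (isEquivalent_const_iff_tendsto (by positivity)).2 (tendsto_integral_rescaledIntegrand hu hy₀)
  refine (IsEquivalent.refl.mul hL).congr_left ?_
  filter_upwards [eventually_gt_atTop 0] with s hs
  exact (integral_eq_mul_integral_rescaledIntegrand ha hs).symm

lemma rate_constant_eq {u y₀ : ℝ} (hu : 0 < u) (hy₀ : 0 < y₀) (h : u * y₀ ^ 3 = π ^ 2 / 2) :
    (2 : ℝ) ^ (-(4 : ℝ) / 3) * 3 * π ^ ((2 : ℝ) / 3) * u ^ ((2 : ℝ) / 3) = 3 / 2 * u * y₀ := by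
  refine (pow_left_inj₀ (by positivity) (by positivity) three_ne_zero).1 ?_
  simp only [mul_pow, ← rpow_mul_natCast zero_le_two, ← rpow_mul_natCast pi_pos.le,
    ← rpow_mul_natCast hu.le]
  norm_num
  linear_combination (-(27 / 8) * u ^ 2) * h

lemma prefactor_constant_eq {u y₀ : ℝ} (hu : 0 < u) (hy₀ : 0 < y₀) (h : u * y₀ ^ 3 = π ^ 2 / 2) :
    (2 : ℝ) ^ ((2 : ℝ) / 3) * π ^ ((1 : ℝ) / 6) * u ^ (-(1 : ℝ) / 3) / √3 =
      y₀⁻¹ * √(π / (3 * u / (2 * y₀))) := by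
  have sqrt_pow_six {x : ℝ} (hx : 0 ≤ x) : √x ^ 6 = x ^ 3 := by
    rw [show 6 = 2 * 3 from rfl, pow_mul, sq_sqrt hx]
  refine (pow_left_inj₀ (by positivity) (by positivity) (by norm_num : 6 ≠ 0)).1 ?_
  simp only [mul_pow, div_pow, inv_pow, ← rpow_mul_natCast zero_le_two,
    ← rpow_mul_natCast pi_pos.le, ← rpow_mul_natCast hu.le, sqrt_pow_six zero_le_three,
    sqrt_pow_six (by positivity : 0 ≤ π / (3 * u / (2 * y₀)))]
  norm_num
  field_simp
  linear_combination 16 * h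

/-- Explicit Laplace asymptotics for the simple random walk: for each fixed `u > 0`,
as `n → ∞`,
`∫_0^∞ x⁻¹ exp{-(nπ²/(4x²) + ux)} dx
  ∼ (2^{2/3} π^{1/6} u^{-1/3}/√3) n^{-1/6} exp{-2^{-4/3}·3·π^{2/3} u^{2/3} n^{1/3}}`. -/
theorem rw_integral_asymptotics (u : ℝ) (hu : 0 < u) :
    Tendsto (fun n : ℝ =>
        (∫ x in Set.Ioi (0 : ℝ), x⁻¹ * exp (-(n * π ^ 2 / (4 * x ^ 2) + u * x))) /
        ((2 : ℝ) ^ ((2 : ℝ) / 3) * π ^ ((1 : ℝ) / 6) * u ^ (-(1 : ℝ) / 3) / Real.sqrt 3 *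
          n ^ (-(1 : ℝ) / 6) *
          exp (-((2 : ℝ) ^ (-(4 : ℝ) / 3) * 3 * π ^ ((2 : ℝ) / 3) * u ^ ((2 : ℝ) / 3) *
            n ^ ((1 : ℝ) / 3)))))
      atTop (𝓝 1) := by
  obtain ⟨y₀, hy₀, hcube⟩ : ∃ y₀ > 0, u * y₀ ^ 3 = π ^ 2 / 2 :=
    ⟨(π ^ 2 / (2 * u)) ^ ((3 : ℕ)⁻¹ : ℝ), by positivity, by
      rw [rpow_inv_natCast_pow (by positivity) three_ne_zero]; field_simp⟩
  have hequiv := (integral_inv_mul_exp_isEquivalent hu hy₀ (a := π ^ 2 / 4)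
    (by linarith)).comp_tendsto (tendsto_rpow_atTop (by norm_num : (0 : ℝ) < 1 / 6))
  rw [isEquivalent_iff_tendsto_one (by
    filter_upwards [eventually_gt_atTop 0] with n hn
    simp only [Function.comp_apply]
    positivity)] at hequiv
  refine hequiv.congr' ?_
  filter_upwards [eventually_gt_atTop 0] with n hn
  have h6 : (n ^ (1 / 6 : ℝ)) ^ 6 = n := by
    rw [← rpow_mul_natCast hn.le]; norm_num
  have h2 : (n ^ (1 / 6 : ℝ)) ^ 2 = n ^ (1 / 3 : ℝ) := by
    rw [← rpow_mul_natCast hn.le]; norm_num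
  have hinv : (n ^ (1 / 6 : ℝ))⁻¹ = n ^ (-(1 : ℝ) / 6) := by
    rw [← rpow_neg hn.le]; norm_num
  simp only [Function.comp_apply, Pi.div_apply, h6, h2, hinv, rate_constant_eq hu hy₀ hcube,
    prefactor_constant_eq hu hy₀ hcube]
  congr 1
  · congr 1 with x
    ring_nf
  · ring_nf
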